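/- arXiv:0707.4468 — 5 statements merged into one kernel-verified Lean document; each statement's English description precedes it below -/
import Mathlib

section
/- For every real number α with α > 1/4 there exists a constant C = C(α) ∈ ℕ such that for all positive integers r, s, n satisfying n > 0, (s : ℝ) > (n : ℝ)^α and gcd(r, s) = 1, the number of positive divisors of n that are congruent to r modulo s is at most C. -/
/-!
Let `D` be a set of divisors of `n`, all `≡ r [MOD s]` and lying in a window `[x, y]`.
Every difference `a - b` of elements of `D` is divisible by `s`, which is coprime to the
elements themselves, and a prime-by-prime comparison of valuations (a layer-cake count) gives
`∏_{d ∈ D} d ^ (2q) ∣ n ^ (q(q+1)) ∏_{a ≠ b} |a - b|`. When `#D = 2q + 1` this yields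
`(s x) ^ (2q(2q+1)) ≤ n ^ (q(q+1)) y ^ (2q(2q+1))`, so `s > n ^ α` leaves room for at most `2q`
such divisors in every window `[x, n ^ γ x]`, where `γ = α - (q+1)/(2(2q+1)) > 0` as soon
as `q` is large, because `(q+1)/(2(2q+1))` decreases to `1/4`. Finitely many, `⌈1/γ⌉`, such
windows cover `[1, n]`.
-/

open Finset

/-- `(N - q)(N - q - 1) ≥ 0`, being a product of consecutive integers. -/
lemma Nat.two_mul_add_one_mul_le (q N : ℕ) : (2 * q + 1) * N ≤ q * (q + 1) + N ^ 2 := by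
  rcases le_or_gt N q with h | h <;> nlinarith

lemma sum_range_ite_lt {x V : ℕ} (hx : x ≤ V) :
    ∑ t ∈ range V, (if t < x then 1 else 0) = x := by
  rw [sum_boole]
  have : {t ∈ range V | t < x} = range x := by
    ext t
    simp only [mem_filter, mem_range]
    omega
  simp [this]

section LayerCake

variable {ι : Type*} {S : Finset ι} {v : ι → ℕ} {V : ℕ}

lemma mul_sum_le_add_sum_sum_min (q : ℕ) (hv : ∀ i ∈ S, v i ≤ V) :
    (2 * q + 1) * ∑ i ∈ S, v i
      ≤ q * (q + 1) * V + ∑ i ∈ S, ∑ j ∈ S, min (v i) (v j) := by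
  set N : ℕ → ℕ := fun t => ∑ i ∈ S, if t < v i then 1 else 0
  have hsum : ∑ i ∈ S, v i = ∑ t ∈ range V, N t := by
    rw [sum_comm]
    exact sum_congr rfl fun i hi => (sum_range_ite_lt (hv i hi)).symm
  have hmin : ∑ i ∈ S, ∑ j ∈ S, min (v i) (v j) = ∑ t ∈ range V, N t ^ 2 := by
    have h : ∀ i ∈ S, ∀ j ∈ S, min (v i) (v j)
        = ∑ t ∈ range V, (if t < v i then 1 else 0) * (if t < v j then 1 else 0) := by
      intro i hi j _
      simp_rw [ite_zero_mul_ite_zero, mul_one, ← lt_min_iff]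
      exact (sum_range_ite_lt ((min_le_left _ _).trans (hv i hi))).symm
    rw [sum_congr rfl fun i hi => sum_congr rfl (h i hi)]
    simp only [N, sq, sum_mul_sum]
    symm
    rw [sum_comm]
    exact sum_congr rfl fun i _ => sum_comm
  calc (2 * q + 1) * ∑ i ∈ S, v i = ∑ t ∈ range V, (2 * q + 1) * N t := by
        rw [hsum, mul_sum]
    _ ≤ ∑ t ∈ range V, (q * (q + 1) + N t ^ 2) :=
        sum_le_sum fun t _ => Nat.two_mul_add_one_mul_le q _
    _ = q * (q + 1) * V + ∑ i ∈ S, ∑ j ∈ S, min (v i) (v j) := by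
        rw [sum_add_distrib, hmin]
        simp [mul_comm]

lemma two_mul_sum_le_add_sum_offDiag_min [DecidableEq ι] (q : ℕ) (hv : ∀ i ∈ S, v i ≤ V) :
    2 * q * ∑ i ∈ S, v i ≤ q * (q + 1) * V + ∑ p ∈ S.offDiag, min (v p.1) (v p.2) := by
  have hsplit : ∑ i ∈ S, ∑ j ∈ S, min (v i) (v j)
      = ∑ i ∈ S, v i + ∑ p ∈ S.offDiag, min (v p.1) (v p.2) := by
    rw [← sum_product', ← diag_union_offDiag, sum_union (disjoint_diag_offDiag _), sum_diag]
    simp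
  have h := mul_sum_le_add_sum_sum_min q hv
  rw [hsplit] at h
  linarith

end LayerCake

lemma Nat.min_factorization_le_factorization_natAbs_sub {a b p : ℕ} (hp : p.Prime)
    (hab : a ≠ b) :
    min (a.factorization p) (b.factorization p) ≤ ((a : ℤ) - b).natAbs.factorization p := by
  set k := min (a.factorization p) (b.factorization p)
  have ha : p ^ k ∣ a := (pow_dvd_pow p (min_le_left _ _)).trans (Nat.ordProj_dvd a p)
  have hb : p ^ k ∣ b := (pow_dvd_pow p (min_le_right _ _)).trans (Nat.ordProj_dvd b p)
  have hsub : ((p ^ k : ℕ) : ℤ) ∣ (a : ℤ) - b :=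
    (Int.natCast_dvd_natCast.2 ha).sub (Int.natCast_dvd_natCast.2 hb)
  rw [Int.natCast_dvd] at hsub
  exact (hp.pow_dvd_iff_le_factorization (by omega)).1 hsub

def pairDiffProd (D : Finset ℕ) : ℕ := ∏ p ∈ D.offDiag, ((p.1 : ℤ) - p.2).natAbs

lemma natAbs_sub_ne_zero_of_mem_offDiag {D : Finset ℕ} {p : ℕ × ℕ} (hp : p ∈ D.offDiag) :
    ((p.1 : ℤ) - p.2).natAbs ≠ 0 := by
  have := (mem_offDiag.1 hp).2.2
  omega

lemma pairDiffProd_ne_zero (D : Finset ℕ) : pairDiffProd D ≠ 0 :=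
  prod_ne_zero_iff.2 fun _ => natAbs_sub_ne_zero_of_mem_offDiag

lemma prod_pow_dvd_pow_mul_pairDiffProd {n : ℕ} (hn : n ≠ 0) (q : ℕ) {D : Finset ℕ}
    (hD : ∀ d ∈ D, d ∣ n) :
    ∏ d ∈ D, d ^ (2 * q) ∣ n ^ (q * (q + 1)) * pairDiffProd D := by
  have hD0 : ∀ d ∈ D, d ≠ 0 := fun d hd h => hn (zero_dvd_iff.1 (h ▸ hD d hd))
  rw [← Nat.factorization_prime_le_iff_dvd
    (prod_ne_zero_iff.2 fun d hd => pow_ne_zero _ (hD0 d hd))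
    (mul_ne_zero (pow_ne_zero _ hn) (pairDiffProd_ne_zero D))]
  intro ℓ hℓ
  rw [Nat.factorization_prod fun d hd => pow_ne_zero _ (hD0 d hd),
    Nat.factorization_mul (pow_ne_zero _ hn) (pairDiffProd_ne_zero D), pairDiffProd,
    Nat.factorization_prod fun _ => natAbs_sub_ne_zero_of_mem_offDiag]
  simp only [Finsupp.coe_finsetSum, Finset.sum_apply, Finsupp.add_apply, Nat.factorization_pow,
    Finsupp.smul_apply, smul_eq_mul]
  calc ∑ d ∈ D, 2 * q * d.factorization ℓ = 2 * q * ∑ d ∈ D, d.factorization ℓ := by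
        rw [mul_sum]
    _ ≤ q * (q + 1) * n.factorization ℓ
          + ∑ p ∈ D.offDiag, min (p.1.factorization ℓ) (p.2.factorization ℓ) :=
        two_mul_sum_le_add_sum_offDiag_min q fun d hd =>
          (Nat.factorization_le_iff_dvd (hD0 d hd) hn).2 (hD d hd) ℓ
    _ ≤ _ := by
        gcongr with p hp
        exact Nat.min_factorization_le_factorization_natAbs_sub hℓ (mem_offDiag.1 hp).2.2

lemma pow_card_offDiag_dvd_pairDiffProd {r s : ℕ} {D : Finset ℕ}
    (hD : ∀ d ∈ D, d ≡ r [MOD s]) : s ^ #D.offDiag ∣ pairDiffProd D := by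
  rw [pairDiffProd, ← prod_const]
  refine prod_dvd_prod_of_dvd _ _ fun p hp => Int.natCast_dvd.1 (Nat.modEq_iff_dvd.1 ?_)
  obtain ⟨h1, h2, -⟩ := mem_offDiag.1 hp
  exact (hD p.2 h2).trans (hD p.1 h1).symm

lemma pow_mul_prod_pow_dvd_pow_mul_pairDiffProd {n r s : ℕ} (hn : n ≠ 0) (hrs : r.gcd s = 1)
    (q : ℕ) {D : Finset ℕ} (hD : ∀ d ∈ D, d ∣ n ∧ d ≡ r [MOD s]) :
    s ^ #D.offDiag * ∏ d ∈ D, d ^ (2 * q) ∣ n ^ (q * (q + 1)) * pairDiffProd D := by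
  have hcop : Nat.Coprime (s ^ #D.offDiag) (∏ d ∈ D, d ^ (2 * q)) :=
    Nat.Coprime.pow_left _ <| Nat.Coprime.prod_right fun d hd =>
      Nat.Coprime.pow_right _ (Nat.Coprime.symm ((hD d hd).2.gcd_eq.trans hrs))
  exact hcop.mul_dvd_of_dvd_of_dvd
    (dvd_mul_of_dvd_right (pow_card_offDiag_dvd_pairDiffProd fun d hd => (hD d hd).2) _)
    (prod_pow_dvd_pow_mul_pairDiffProd hn q fun d hd => (hD d hd).1)

lemma pow_mul_pow_le_pow_mul_pow {n r s : ℕ} (hn : n ≠ 0) (hrs : r.gcd s = 1) (q : ℕ)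
    {x y : ℝ} (hx : 0 ≤ x) {D : Finset ℕ}
    (hD : ∀ d ∈ D, d ∣ n ∧ d ≡ r [MOD s] ∧ x ≤ d ∧ d ≤ y) :
    (s : ℝ) ^ #D.offDiag * x ^ (2 * q * #D) ≤ (n : ℝ) ^ (q * (q + 1)) * y ^ #D.offDiag := by
  have hdvd := Nat.le_of_dvd (Nat.pos_of_ne_zero (mul_ne_zero (pow_ne_zero _ hn)
    (pairDiffProd_ne_zero D))) (pow_mul_prod_pow_dvd_pow_mul_pairDiffProd hn hrs q
      fun d hd => ⟨(hD d hd).1, (hD d hd).2.1⟩)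
  have hle : (s : ℝ) ^ #D.offDiag * ∏ d ∈ D, (d : ℝ) ^ (2 * q)
      ≤ (n : ℝ) ^ (q * (q + 1)) * ∏ p ∈ D.offDiag, |(p.1 : ℝ) - p.2| := by
    simpa [pairDiffProd, Nat.cast_natAbs] using (Nat.cast_le (α := ℝ)).2 hdvd
  calc (s : ℝ) ^ #D.offDiag * x ^ (2 * q * #D)
        = (s : ℝ) ^ #D.offDiag * ∏ _d ∈ D, x ^ (2 * q) := by
        rw [prod_const, ← pow_mul]
    _ ≤ (s : ℝ) ^ #D.offDiag * ∏ d ∈ D, (d : ℝ) ^ (2 * q) := by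
        gcongr with d hd
        exact (hD d hd).2.2.1
    _ ≤ (n : ℝ) ^ (q * (q + 1)) * ∏ p ∈ D.offDiag, |(p.1 : ℝ) - p.2| := hle
    _ ≤ (n : ℝ) ^ (q * (q + 1)) * y ^ #D.offDiag := by
        rw [← prod_const]
        gcongr with p hp
        obtain ⟨h1, h2, -⟩ := mem_offDiag.1 hp
        have := hD _ h1
        have := hD _ h2
        rw [abs_sub_le_iff]
        constructor <;> linarith

lemma card_filter_modEq_le {n r s q : ℕ} (hn : n ≠ 0) (hrs : r.gcd s = 1) {x y : ℝ}
    (hx : 0 ≤ x)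
    (hxy : (n : ℝ) ^ (q * (q + 1)) * y ^ (2 * q * (2 * q + 1))
      < (s * x) ^ (2 * q * (2 * q + 1))) :
    #{d ∈ n.divisors | d ≡ r [MOD s] ∧ x ≤ d ∧ d ≤ y} ≤ 2 * q := by
  by_contra! h
  obtain ⟨E, hE, hcard⟩ := exists_subset_card_eq (h : 2 * q + 1 ≤ _)
  have hoff : #E.offDiag = 2 * q * (2 * q + 1) := by
    rw [offDiag_card, hcard, ← Nat.mul_sub_one, Nat.succ_sub_one, mul_comm]
  have := pow_mul_pow_le_pow_mul_pow hn hrs q hx (D := E) fun d hd => by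
    have := mem_filter.1 (hE hd)
    exact ⟨Nat.dvd_of_mem_divisors this.1, this.2⟩
  rw [hoff, hcard, ← mul_pow] at this
  linarith

lemma card_filter_le_mul_add_one {F : Finset ℕ} (hF : 0 ∉ F) {c : ℝ} (hc : 0 < c) {k : ℕ}
    (hwin : ∀ x : ℝ, 0 < x → #{d ∈ F | x ≤ (d : ℕ) ∧ d ≤ c * x} ≤ k) (j : ℕ) :
    #{d ∈ F | (d : ℕ) ≤ c ^ j} ≤ k * j + 1 := by
  induction j with
  | zero =>
    have h1 : ∀ d ∈ {d ∈ F | (d : ℕ) ≤ c ^ 0}, d = 1 := fun d hd => by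
      obtain ⟨hdF, hd1⟩ := mem_filter.1 hd
      have : d ≠ 0 := ne_of_mem_of_not_mem hdF hF
      have : d ≤ 1 := by exact_mod_cast (pow_zero c).subst hd1
      omega
    exact card_le_one.2 fun a ha b hb => (h1 a ha).trans (h1 b hb).symm
  | succ j ih =>
    calc #{d ∈ F | (d : ℕ) ≤ c ^ (j + 1)}
        ≤ #({d ∈ F | (d : ℕ) ≤ c ^ j}
            ∪ {d ∈ F | c ^ j ≤ (d : ℕ) ∧ d ≤ c * c ^ j}) := by
          refine card_le_card fun d hd => ?_
          obtain ⟨hdF, hd⟩ := mem_filter.1 hd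
          rw [pow_succ'] at hd
          simp only [mem_union, mem_filter, hdF, true_and]
          by_cases h : (d : ℝ) ≤ c ^ j
          · exact Or.inl h
          · exact Or.inr ⟨(not_le.1 h).le, hd⟩
      _ ≤ (k * j + 1) + k := (card_union_le _ _).trans (add_le_add ih (hwin _ (pow_pos hc j)))
      _ = k * (j + 1) + 1 := by ring

lemma exists_nat_mul_succ_lt {α : ℝ} (hα : 1 / 4 < α) :
    ∃ q : ℕ, 0 < q ∧ (q * (q + 1) : ℝ) < α * (2 * q * (2 * q + 1)) := by
  obtain ⟨q, hq⟩ := exists_nat_gt (1 / (4 * α - 1))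
  have h4 : 0 < 4 * α - 1 := by linarith
  have hq0 : (0 : ℝ) < q := lt_trans (by positivity) hq
  refine ⟨q, by exact_mod_cast hq0, ?_⟩
  rw [div_lt_iff₀ h4] at hq
  nlinarith

/-- For every real `α > 1/4` there exists a constant `C = C(α)` such that for all
positive integers `r, s, n` with `(s : ℝ) > (n : ℝ) ^ α` and `gcd(r, s) = 1`, the number of
positive divisors of `n` congruent to `r` modulo `s` is at most `C`. -/
theorem stmt_0 :
    ∀ α : ℝ, α > 1 / 4 →
      ∃ C : ℕ, ∀ r s n : ℕ, 0 < r → 0 < s → 0 < n →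
        (s : ℝ) > (n : ℝ) ^ α → Nat.gcd r s = 1 →
        (n.divisors.filter fun d => d ≡ r [MOD s]).card ≤ C := by
  intro α hα
  obtain ⟨q, hq, hqα⟩ := exists_nat_mul_succ_lt hα
  set M := 2 * q * (2 * q + 1)
  have hM : (0 : ℝ) < M := by positivity
  set γ := α - ((q * (q + 1) : ℕ) : ℝ) / M
  have hγ : 0 < γ := sub_pos.2 ((div_lt_iff₀ hM).2 (by push_cast [M]; linarith))
  have hexp : ((q * (q + 1) : ℕ) : ℝ) + γ * M = α * M := by
    simp only [γ]
    field_simp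
    ring
  obtain ⟨J, hJ⟩ := exists_nat_ge γ⁻¹
  have hγJ : 1 ≤ γ * J := by
    have := mul_le_mul_of_nonneg_left hJ hγ.le
    rwa [mul_inv_cancel₀ hγ.ne'] at this
  refine ⟨2 * q * J + 1, fun r s n _ _ hn hsn hrs => ?_⟩
  set F := n.divisors.filter fun d => d ≡ r [MOD s] with hF
  have hn0 : (0 : ℝ) < n := by exact_mod_cast hn
  have hwin : ∀ x : ℝ, 0 < x →
      #{d ∈ F | x ≤ (d : ℕ) ∧ d ≤ (n : ℝ) ^ γ * x} ≤ 2 * q := by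
    intro x hx
    rw [hF, filter_filter]
    refine card_filter_modEq_le hn.ne' hrs hx.le ?_
    calc (n : ℝ) ^ (q * (q + 1)) * ((n : ℝ) ^ γ * x) ^ M = ((n : ℝ) ^ α * x) ^ M := by
          rw [mul_pow, mul_pow, ← mul_assoc, ← Real.rpow_mul_natCast hn0.le,
            ← Real.rpow_mul_natCast hn0.le, ← Real.rpow_natCast, ← Real.rpow_add hn0, hexp]
      _ < (s * x) ^ M := by gcongr
  have hle : ∀ d ∈ F, (d : ℝ) ≤ ((n : ℝ) ^ γ) ^ J := by
    intro d hd
    calc (d : ℝ) ≤ n := by exact_mod_cast Nat.divisor_le (mem_filter.1 hd).1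
      _ = (n : ℝ) ^ (1 : ℝ) := (Real.rpow_one _).symm
      _ ≤ (n : ℝ) ^ (γ * J) := Real.rpow_le_rpow_of_exponent_le (by exact_mod_cast hn) hγJ
      _ = ((n : ℝ) ^ γ) ^ J := Real.rpow_mul_natCast hn0.le γ J
  rw [← filter_true_of_mem hle]
  exact card_filter_le_mul_add_one (by simp [hF, hn.ne']) (by positivity) hwin J
end

section
/- Let ε ≥ 0 be a real number and let p, q, N be positive real numbers with N = p·q, p ≤ q ≤ 2p, and √N − p ≤ N^{1/4 + ε}. Then p + q − 2√N ≤ √2 · N^{2ε}. -/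
/-!
Writing `N = p q`, the Fermat gap is a perfect square divided by `p`:
`p + q - 2√N = (√N - p)² / p`. Squaring the closeness hypothesis bounds the numerator by
`N^(1/2 + 2ε) = √N · N^(2ε)`, and balancedness `q ≤ 2p` gives `√N ≤ √2 · p`, which cancels the `p`.
-/

namespace Real

theorem add_sub_two_sqrt_mul_eq {p : ℝ} (q : ℝ) (hp : 0 < p) (hq : 0 ≤ q) :
    p + q - 2 * √(p * q) = (√(p * q) - p) ^ 2 / p := by
  have hsq : √(p * q) ^ 2 = p * q := sq_sqrt (mul_nonneg hp.le hq)
  field_simp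
  linear_combination -hsq

theorem le_sqrt_mul_of_le {p q : ℝ} (hp : 0 ≤ p) (hpq : p ≤ q) : p ≤ √(p * q) :=
  le_sqrt_of_sq_le (by nlinarith)

theorem sqrt_mul_le_sqrt_two_mul {p q : ℝ} (hp : 0 ≤ p) (hq : q ≤ 2 * p) :
    √(p * q) ≤ √2 * p :=
  sqrt_le_iff.2 ⟨by positivity, by rw [mul_pow, sq_sqrt zero_le_two]; nlinarith⟩

theorem rpow_quarter_add_sq {N : ℝ} (hN : 0 < N) (ε : ℝ) :
    (N ^ (1 / 4 + ε)) ^ 2 = √N * N ^ (2 * ε) := by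
  rw [← rpow_mul_natCast hN.le, sqrt_eq_rpow, ← rpow_add hN]
  ring_nf

end Real

open Real in
theorem stmt_7_general (ε p q N : ℝ) (hp : 0 < p) (hN : 0 < N)
    (hpq : N = p * q) (h1 : p ≤ q) (h2 : q ≤ 2 * p)
    (hclose : Real.sqrt N - p ≤ N ^ (1 / 4 + ε)) :
    p + q - 2 * Real.sqrt N ≤ Real.sqrt 2 * N ^ (2 * ε) := by
  have hgap_nonneg : 0 ≤ √N - p := by
    rw [hpq, sub_nonneg]; exact le_sqrt_mul_of_le hp.le h1
  rw [hpq, add_sub_two_sqrt_mul_eq q hp (hp.le.trans h1), ← hpq, div_le_iff₀ hp]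
  calc (√N - p) ^ 2 ≤ (N ^ (1 / 4 + ε)) ^ 2 := pow_le_pow_left₀ hgap_nonneg hclose 2
    _ = √N * N ^ (2 * ε) := rpow_quarter_add_sq hN ε
    _ ≤ √2 * p * N ^ (2 * ε) := by
      gcongr; rw [hpq]; exact sqrt_mul_le_sqrt_two_mul hp.le h2
    _ = √2 * N ^ (2 * ε) * p := by ring

/-- Let `ε ≥ 0` and let `p, q, N` be positive reals with `N = p * q`, `p ≤ q ≤ 2p` and
`√N − p ≤ N^(1/4 + ε)`. Then `p + q − 2√N ≤ √2 * N^(2ε)`. -/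
theorem stmt_7 (ε p q N : ℝ) (hε : 0 ≤ ε) (hp : 0 < p) (hq : 0 < q) (hN : 0 < N)
    (hpq : N = p * q) (h1 : p ≤ q) (h2 : q ≤ 2 * p)
    (hclose : Real.sqrt N - p ≤ N ^ (1 / 4 + ε)) :
    p + q - 2 * Real.sqrt N ≤ Real.sqrt 2 * N ^ (2 * ε) :=
  stmt_7_general ε p q N hp hN hpq h1 h2 hclose
end

section
/- Let r ≥ 1 and p > 0 be real numbers, let u be a real number with q := r·p + u > 0, and set N = p·q. Then |√(N/r) − p| ≤ |u|/r and |√(r·N) − q| ≤ |u|. -/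
/-!
Both bounds are instances of `|√(a b) - a| ≤ |b - a|` for `a, b ≥ 0`, since
`N / r = p · (q / r)` with `q / r - p = u / r`, and `r N = q · (q - u)`.
-/

namespace Real

theorem abs_sqrt_mul_sub_le {a b : ℝ} (ha : 0 ≤ a) (hb : 0 ≤ b) :
    |√(a * b) - a| ≤ |b - a| := by
  have hfactor : √(a * b) - a = √a * (√b - √a) := by
    rw [sqrt_mul ha, mul_sub, mul_self_sqrt ha]
  have hdiff : b - a = (√b + √a) * (√b - √a) := by
    rw [← mul_self_sub_mul_self, mul_self_sqrt ha, mul_self_sqrt hb]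
  rw [hfactor, hdiff, abs_mul, abs_mul, abs_of_nonneg (sqrt_nonneg a),
    abs_of_nonneg (by positivity : 0 ≤ √b + √a)]
  gcongr
  exact le_add_of_nonneg_left (sqrt_nonneg b)

end Real

/-- Let `r ≥ 1`, `p > 0` be reals, `u` a real with `q := r * p + u > 0`, and `N = p * q`.
Then `|√(N/r) − p| ≤ |u|/r` and `|√(rN) − q| ≤ |u|`. -/
theorem stmt_9 (r p u q N : ℝ) (hr : 1 ≤ r) (hp : 0 < p)
    (hqdef : q = r * p + u) (hq : 0 < q) (hN : N = p * q) :
    |Real.sqrt (N / r) - p| ≤ |u| / r ∧ |Real.sqrt (r * N) - q| ≤ |u| := by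
  have hr0 : 0 < r := by linarith
  constructor
  · have hNr : N / r = p * (q / r) := by rw [hN, mul_div_assoc]
    have hqr : q / r - p = u / r := by field_simp; linarith
    simpa only [hNr, hqr, abs_div, abs_of_pos hr0] using
      Real.abs_sqrt_mul_sub_le hp.le (div_pos hq hr0).le
  · have hrN : r * N = q * (q - u) := by rw [hN, hqdef]; ring
    have hqu : 0 ≤ q - u := by rw [hqdef, add_sub_cancel_right]; positivity
    simpa only [hrN, sub_sub_cancel_left, abs_neg] using Real.abs_sqrt_mul_sub_le hq.le hqu
end

section
/- Let n ≥ 1 and d ≥ 0 be integers, and let a and b be nonzero polynomials in n variables over ℤ such that b is a multiple of a in ℤ[x₁,…,xₙ] and both a and b have degree at most d in each variable separately. Then the ℓ² norm of b satisfies ‖b‖₂ ≥ 2^{−(d+1)ⁿ + 1}·‖a‖_∞, where ‖b‖₂ = √(∑_e b_e²) is the square root of the sum of the squares of the coefficients of b and ‖a‖_∞ = max_e |a_e| is the maximum absolute value of a coefficient of a. -/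
/-!
Under the Kronecker substitution `xᵢ ↦ X ^ (d + 1) ^ i`, an exponent vector with entries `≤ d`
becomes the integer with those base-`(d + 1)` digits, so `a ∣ b` turns into `A ∣ B` for univariate
integer polynomials of degree `< (d + 1) ^ n` with the same coefficients. For these Mignotte's
bound holds: `|A_j| ≤ C(deg A, j) M(A) ≤ 2 ^ deg A · M(B) ≤ 2 ^ deg A · ‖B‖₂`, since the Mahler
measure `M` is multiplicative, is `≥ 1` on the nonzero integer polynomial `B / A`, and satisfies
Landau's inequality `M(B) ≤ ‖B‖₂`.
-/

open Polynomial

theorem Polynomial.abs_coeff_le_two_pow_natDegree_mul_sqrt_sum_sq_of_dvd {A B : ℤ[X]}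
    (hB : B ≠ 0) (hAB : A ∣ B) (j : ℕ) :
    |(A.coeff j : ℝ)| ≤ 2 ^ A.natDegree * √(∑ k ∈ B.support, (B.coeff k : ℝ) ^ 2) := by
  obtain ⟨Q, rfl⟩ := hAB
  have hQ : Q ≠ 0 := right_ne_zero_of_mul hB
  set φ := Int.castRingHom ℂ
  calc |(A.coeff j : ℝ)| = ‖(A.map φ).coeff j‖ := by simp [φ]
    _ ≤ (A.map φ).natDegree.choose j * (A.map φ * Q.map φ).mahlerMeasure :=
      norm_coeff_le_choose_mul_mahlerMeasure_of_one_le_mahlerMeasure j _ _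
        (one_le_mahlerMeasure_of_ne_zero hQ)
    _ ≤ 2 ^ A.natDegree * ((A * Q).map φ).mahlerMeasure := by
      rw [natDegree_map_eq_of_injective φ.injective_int, Polynomial.map_mul]
      gcongr
      · exact mahlerMeasure_nonneg _
      · exact_mod_cast Nat.choose_le_two_pow _ _
    _ ≤ 2 ^ A.natDegree * √(∑ k ∈ ((A * Q).map φ).support, ‖((A * Q).map φ).coeff k‖ ^ 2) := by
      gcongr
      exact mahlerMeasure_le_sqrt_sum_sq_norm_coeff _
    _ = 2 ^ A.natDegree * √(∑ k ∈ (A * Q).support, ((A * Q).coeff k : ℝ) ^ 2) := by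
      rw [support_map_of_injective _ φ.injective_int]
      simp only [coeff_map, φ, eq_intCast, Complex.norm_intCast, sq_abs]

namespace MvPolynomial

variable {R : Type*} [CommSemiring R] {n : ℕ} (d : ℕ)

def kroneckerIndex (e : Fin n →₀ ℕ) : ℕ := ∑ i, e i * (d + 1) ^ (i : ℕ)

noncomputable def kroneckerSubst : MvPolynomial (Fin n) R →+* R[X] :=
  eval₂Hom Polynomial.C fun i => Polynomial.X ^ (d + 1) ^ (i : ℕ)

variable {d}

lemma le_of_mem_support_of_degreeOf_le {p : MvPolynomial (Fin n) R} (hp : ∀ i, p.degreeOf i ≤ d)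
    {e : Fin n →₀ ℕ} (he : e ∈ p.support) (i : Fin n) : e i ≤ d :=
  degreeOf_le_iff.1 (hp i) e he

lemma kroneckerIndex_eq_finFunctionFinEquiv {e : Fin n →₀ ℕ} (he : ∀ i, e i ≤ d) :
    kroneckerIndex d e =
      finFunctionFinEquiv fun i => (⟨e i, Nat.lt_succ_of_le (he i)⟩ : Fin (d + 1)) := by
  simp [kroneckerIndex]

lemma kroneckerIndex_lt {e : Fin n →₀ ℕ} (he : ∀ i, e i ≤ d) :
    kroneckerIndex d e < (d + 1) ^ n := by
  rw [kroneckerIndex_eq_finFunctionFinEquiv he]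
  exact Fin.is_lt _

lemma kroneckerIndex_injOn : Set.InjOn (kroneckerIndex d) {e : Fin n →₀ ℕ | ∀ i, e i ≤ d} := by
  intro e he e' he' h
  rw [kroneckerIndex_eq_finFunctionFinEquiv he, kroneckerIndex_eq_finFunctionFinEquiv he',
    Fin.val_inj, finFunctionFinEquiv.apply_eq_iff_eq] at h
  ext i
  exact congrArg Fin.val (congrFun h i)

variable (d) in
lemma kroneckerSubst_monomial (e : Fin n →₀ ℕ) (r : R) :
    kroneckerSubst d (monomial e r) = Polynomial.monomial (kroneckerIndex d e) r := by
  simp [kroneckerSubst, eval₂_monomial, Finsupp.prod_fintype, ← pow_mul,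
    Finset.prod_pow_eq_pow_sum, kroneckerIndex, ← Polynomial.C_mul_X_pow_eq_monomial, mul_comm]

variable (d) in
lemma kroneckerSubst_eq_sum (p : MvPolynomial (Fin n) R) :
    kroneckerSubst d p = ∑ e ∈ p.support, Polynomial.monomial (kroneckerIndex d e) (coeff e p) := by
  conv_lhs => rw [p.as_sum]
  simp only [map_sum, kroneckerSubst_monomial]

lemma coeff_kroneckerSubst_kroneckerIndex {p : MvPolynomial (Fin n) R}
    (hp : ∀ i, p.degreeOf i ≤ d) {e : Fin n →₀ ℕ} (he : ∀ i, e i ≤ d) :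
    (kroneckerSubst d p).coeff (kroneckerIndex d e) = coeff e p := by
  rw [kroneckerSubst_eq_sum, finsetSum_coeff, Finset.sum_eq_single e]
  · simp
  · intro e' he' hne
    rw [Polynomial.coeff_monomial, if_neg]
    exact fun h => hne (kroneckerIndex_injOn (le_of_mem_support_of_degreeOf_le hp he') he h)
  · intro he'
    simp [notMem_support_iff.1 he']

lemma coeff_kroneckerSubst_eq_zero {p : MvPolynomial (Fin n) R} {k : ℕ}
    (hk : k ∉ p.support.image (kroneckerIndex d)) :
    (kroneckerSubst d p).coeff k = 0 := by
  rw [kroneckerSubst_eq_sum, finsetSum_coeff]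
  refine Finset.sum_eq_zero fun e he => ?_
  rw [Polynomial.coeff_monomial, if_neg]
  exact fun h => hk (Finset.mem_image.2 ⟨e, he, h⟩)

lemma support_kroneckerSubst {p : MvPolynomial (Fin n) R} (hp : ∀ i, p.degreeOf i ≤ d) :
    (kroneckerSubst d p).support = p.support.image (kroneckerIndex d) := by
  ext k
  constructor
  · intro hk
    by_contra h
    exact Polynomial.mem_support_iff.1 hk (coeff_kroneckerSubst_eq_zero h)
  · intro hk
    obtain ⟨e, he, rfl⟩ := Finset.mem_image.1 hk
    rw [Polynomial.mem_support_iff,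
      coeff_kroneckerSubst_kroneckerIndex hp (le_of_mem_support_of_degreeOf_le hp he)]
    exact mem_support_iff.1 he

lemma sum_support_kroneckerSubst {M : Type*} [AddCommMonoid M] {p : MvPolynomial (Fin n) R}
    (hp : ∀ i, p.degreeOf i ≤ d) (f : R → M) :
    ∑ k ∈ (kroneckerSubst d p).support, f ((kroneckerSubst d p).coeff k) =
      ∑ e ∈ p.support, f (coeff e p) := by
  rw [support_kroneckerSubst hp, Finset.sum_image fun e he e' he' h =>
    kroneckerIndex_injOn (le_of_mem_support_of_degreeOf_le hp he)
      (le_of_mem_support_of_degreeOf_le hp he') h]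
  refine Finset.sum_congr rfl fun e he => ?_
  rw [coeff_kroneckerSubst_kroneckerIndex hp (le_of_mem_support_of_degreeOf_le hp he)]

lemma kroneckerSubst_ne_zero {p : MvPolynomial (Fin n) R} (hp : ∀ i, p.degreeOf i ≤ d)
    (hp₀ : p ≠ 0) : kroneckerSubst d p ≠ 0 := by
  rw [← Polynomial.nonempty_support_iff, support_kroneckerSubst hp, Finset.image_nonempty]
  exact support_nonempty.2 hp₀

lemma natDegree_kroneckerSubst_le {p : MvPolynomial (Fin n) R} (hp : ∀ i, p.degreeOf i ≤ d) :
    (kroneckerSubst d p).natDegree ≤ (d + 1) ^ n - 1 := by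
  refine natDegree_le_iff_coeff_eq_zero.2 fun k hk => coeff_kroneckerSubst_eq_zero fun hmem => ?_
  obtain ⟨e, he, rfl⟩ := Finset.mem_image.1 hmem
  have := kroneckerIndex_lt (le_of_mem_support_of_degreeOf_le hp he)
  omega

end MvPolynomial

open MvPolynomial in
theorem stmt_12_general (n : ℕ) (d : ℕ) (a b : MvPolynomial (Fin n) ℤ)
    (hb : b ≠ 0) (hdvd : a ∣ b)
    (hda : ∀ i, a.degreeOf i ≤ d) (hdb : ∀ i, b.degreeOf i ≤ d) :
    Real.sqrt (∑ e ∈ b.support, (((b.coeff e : ℤ) : ℝ)) ^ 2) ≥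
      (2 : ℝ) ^ (-(((d : ℤ) + 1) ^ n) + 1) *
        ((a.support.sup fun e => (a.coeff e).natAbs : ℕ) : ℝ) := by
  set N := (d + 1) ^ n - 1
  set normB := √(∑ e ∈ b.support, ((b.coeff e : ℤ) : ℝ) ^ 2) with hnormB
  have hcoeff : ∀ e ∈ a.support, |((a.coeff e : ℤ) : ℝ)| ≤ 2 ^ N * normB := by
    intro e he
    rw [hnormB, ← sum_support_kroneckerSubst hdb fun c : ℤ => (c : ℝ) ^ 2,
      ← coeff_kroneckerSubst_kroneckerIndex hda (le_of_mem_support_of_degreeOf_le hda he)]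
    refine (abs_coeff_le_two_pow_natDegree_mul_sqrt_sum_sq_of_dvd (kroneckerSubst_ne_zero hdb hb)
      (map_dvd _ hdvd) _).trans ?_
    gcongr
    · norm_num
    · exact natDegree_kroneckerSubst_le hda
  have hsup : ((a.support.sup fun e => (a.coeff e).natAbs : ℕ) : ℝ) ≤ 2 ^ N * normB :=
    Finset.sup_induction (p := fun m : ℕ => (m : ℝ) ≤ 2 ^ N * normB)
      (by simp only [Nat.bot_eq_zero, Nat.cast_zero]; positivity)
      (fun m hm k hk => by simpa using max_le hm hk)
      (fun e he => by simpa [Nat.cast_natAbs] using hcoeff e he)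
  have hexp : -(((d : ℤ) + 1) ^ n) + 1 = -(N : ℤ) := by
    have : 1 ≤ (d + 1) ^ n := Nat.one_le_pow _ _ d.succ_pos
    push_cast [N, Nat.cast_sub this]
    ring
  rw [ge_iff_le, hexp, zpow_neg, zpow_natCast, inv_mul_le_iff₀ (by positivity)]
  exact hsup

/-- Mignotte-type bound: if `a, b` are nonzero polynomials in `n` variables over `ℤ`, `b` is
a multiple of `a`, and both have degree at most `d` in each variable separately, then
`‖b‖₂ ≥ 2^(−(d+1)ⁿ + 1) * ‖a‖_∞`. -/
theorem stmt_12 (n : ℕ) (hn : 1 ≤ n) (d : ℕ) (a b : MvPolynomial (Fin n) ℤ)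
    (ha : a ≠ 0) (hb : b ≠ 0) (hdvd : a ∣ b)
    (hda : ∀ i, a.degreeOf i ≤ d) (hdb : ∀ i, b.degreeOf i ≤ d) :
    Real.sqrt (∑ e ∈ b.support, (((b.coeff e : ℤ) : ℝ)) ^ 2) ≥
      (2 : ℝ) ^ (-(((d : ℤ) + 1) ^ n) + 1) *
        ((a.support.sup fun e => (a.coeff e).natAbs : ℕ) : ℝ) :=
  stmt_12_general n d a b hb hdvd hda hdb
end

section
/- Let f ∈ ℤ[x₁,…,xₙ] be a polynomial in n variables with w > 0 nonzero terms, let N ≥ 1 be an integer, let X₁,…,Xₙ be positive integers, and let (x₁,…,xₙ) be integers with |xᵢ| ≤ Xᵢ for all i. If f(x₁,…,xₙ) ≡ 0 (mod N) and √(∑_e (f_e·X₁^{e₁}⋯Xₙ^{eₙ})²) < N/√w, where the sum runs over the exponent vectors e of the nonzero terms of f with coefficients f_e, then f(x₁,…,xₙ) = 0 holds over the integers ℤ. -/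
/-!
Bound `|f(x)|` by the ℓ¹-norm of the scaled coefficient vector, and that by `√w` times its
ℓ²-norm (Cauchy–Schwarz), which is `< N`. An integer multiple of `N` of absolute value `< N`
is `0`.
-/

open Finset

theorem MvPolynomial.abs_eval_le_sum_abs_coeff_mul_prod {R σ : Type*} [CommRing R] [LinearOrder R]
    [IsStrictOrderedRing R] [Fintype σ] (f : MvPolynomial σ R) {x X : σ → R}
    (hx : ∀ i, |x i| ≤ X i) :
    |MvPolynomial.eval x f| ≤ ∑ e ∈ f.support, |f.coeff e| * ∏ i, X i ^ e i := by
  rw [MvPolynomial.eval_eq']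
  refine (abs_sum_le_sum_abs _ _).trans (sum_le_sum fun e _ => ?_)
  rw [abs_mul, abs_prod]
  gcongr with i
  rw [abs_pow]
  gcongr
  exact hx i

theorem Real.sum_abs_le_sqrt_card_mul_sqrt_sum_sq {ι : Type*} (s : Finset ι) (a : ι → ℝ) :
    ∑ i ∈ s, |a i| ≤ √(#s : ℝ) * √(∑ i ∈ s, a i ^ 2) := by
  rw [← Real.sqrt_mul (Nat.cast_nonneg _)]
  apply Real.le_sqrt_of_sq_le
  simpa only [sq_abs] using sq_sum_le_card_mul_sum_sq (s := s) (f := fun i => |a i|)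

theorem stmt_13_general (n : ℕ) (f : MvPolynomial (Fin n) ℤ)
    (N : ℕ) (X : Fin n → ℕ)
    (x : Fin n → ℤ) (hx : ∀ i, |x i| ≤ (X i : ℤ))
    (hmod : (N : ℤ) ∣ MvPolynomial.eval x f)
    (hnorm : Real.sqrt (∑ e ∈ f.support,
        (((f.coeff e : ℤ) : ℝ) * ∏ i, (X i : ℝ) ^ (e i)) ^ 2) <
      (N : ℝ) / Real.sqrt (f.support.card : ℝ)) :
    MvPolynomial.eval x f = 0 := by
  set a : (Fin n →₀ ℕ) → ℝ := fun e => ((f.coeff e : ℤ) : ℝ) * ∏ i, (X i : ℝ) ^ e i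
  have hcard : 0 < √(#f.support : ℝ) := by
    by_contra! h
    rw [le_antisymm h (Real.sqrt_nonneg _), div_zero] at hnorm
    exact (Real.sqrt_nonneg _).not_gt hnorm
  have hl1_norm : ((∑ e ∈ f.support, |f.coeff e| * ∏ i, (X i : ℤ) ^ e i : ℤ) : ℝ) =
      ∑ e ∈ f.support, |a e| := by
    push_cast
    refine sum_congr rfl fun e _ => ?_
    rw [abs_mul, abs_of_nonneg (by positivity : (0 : ℝ) ≤ ∏ i, (X i : ℝ) ^ e i)]
  have hlt : ((|MvPolynomial.eval x f| : ℤ) : ℝ) < N :=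
    calc ((|MvPolynomial.eval x f| : ℤ) : ℝ)
        ≤ ∑ e ∈ f.support, |a e| := by
          rw [← hl1_norm]; exact_mod_cast f.abs_eval_le_sum_abs_coeff_mul_prod hx
      _ ≤ √(#f.support : ℝ) * √(∑ e ∈ f.support, a e ^ 2) :=
          Real.sum_abs_le_sqrt_card_mul_sqrt_sum_sq _ _
      _ < N := by rwa [← lt_div_iff₀' hcard]
  exact Int.eq_zero_of_abs_lt_dvd hmod (by exact_mod_cast hlt)

/-- Howgrave-Graham: let `f ∈ ℤ[x₁,…,xₙ]` have `w > 0` nonzero terms, `N ≥ 1`, `Xᵢ` positive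
integers and `|xᵢ| ≤ Xᵢ`. If `f(x) ≡ 0 (mod N)` and the norm of the scaled polynomial
satisfies `‖f(x₁X₁,…,xₙXₙ)‖₂ < N / √w`, then `f(x) = 0` over `ℤ`. -/
theorem stmt_13 (n : ℕ) (f : MvPolynomial (Fin n) ℤ) (hw : 0 < f.support.card)
    (N : ℕ) (hN : 1 ≤ N) (X : Fin n → ℕ) (hX : ∀ i, 0 < X i)
    (x : Fin n → ℤ) (hx : ∀ i, |x i| ≤ (X i : ℤ))
    (hmod : (N : ℤ) ∣ MvPolynomial.eval x f)
    (hnorm : Real.sqrt (∑ e ∈ f.support,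
        (((f.coeff e : ℤ) : ℝ) * ∏ i, (X i : ℝ) ^ (e i)) ^ 2) <
      (N : ℝ) / Real.sqrt (f.support.card : ℝ)) :
    MvPolynomial.eval x f = 0 :=
  stmt_13_general n f N X x hx hmod hnorm
end
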